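/- arXiv:2112.11835 — 4 statements merged into one kernel-verified Lean document; each statement's English description precedes it below -/
import Mathlib

section
/- Let Ω ⊂ ℝ² be a bounded open set, let ε > 0, α > 0, and let a, b : Ω → ℝ satisfy a(x,y) ≥ α and b(x,y) ≥ 0 on Ω. Let m_x and M_x be the infimum and supremum of the first coordinate over Ω. Suppose z is continuous on the closure of Ω, twice differentiable on Ω, and satisfies −εΔz + a·(∂z/∂x) + b·z = p on Ω and z = q on ∂Ω, where p : Ω → ℝ is bounded and q : ∂Ω → ℝ. Then sup over the closure of Ω of |z| is at most sup_{∂Ω} |q| + ((M_x − m_x)/α)·sup_Ω |p|. -/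
/-!
At an interior minimum of `u` the slices of `u` in `x` and in `y` have a minimum too, so
`u_x = 0`, `u_xx ≥ 0` and `u_yy ≥ 0` there; if moreover `u < 0` and `b ≥ 0`, then `L u ≤ 0`.
Hence `L u > 0` in `Ω` together with `u ≥ 0` on `∂Ω` forces `u ≥ 0` on the closure
(weak maximum principle). Apply this to `u = sup|q| + c (x - m_x) ± z`: since `a ≥ α` and
`b ≥ 0`, `L u ≥ α c - sup|p| > 0` as soon as `c > sup|p| / α`, while `u ≥ 0` on `∂Ω`. Letting
`c` decrease to `sup|p| / α` gives `|z| ≤ sup|q| + (sup|p| / α) (x - m_x)` on the closure.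
-/

/-- Partial derivative with respect to the first (x) coordinate. -/
noncomputable def pderivX (f : ℝ × ℝ → ℝ) (p : ℝ × ℝ) : ℝ :=
  deriv (fun s => f (s, p.2)) p.1

/-- Second partial derivative with respect to the first (x) coordinate. -/
noncomputable def pderivXX (f : ℝ × ℝ → ℝ) (p : ℝ × ℝ) : ℝ :=
  deriv (fun s => deriv (fun s' => f (s', p.2)) s) p.1

/-- Second partial derivative with respect to the second (y) coordinate. -/
noncomputable def pderivYY (f : ℝ × ℝ → ℝ) (p : ℝ × ℝ) : ℝ :=
  deriv (fun s => deriv (fun s' => f (p.1, s')) s) p.2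

/-- The convection-diffusion operator `L z = -ε Δz + a z_x + b z`. -/
noncomputable def Lop (ε : ℝ) (a b : ℝ × ℝ → ℝ) (z : ℝ × ℝ → ℝ) (p : ℝ × ℝ) : ℝ :=
  -ε * (pderivXX z p + pderivYY z p) + a p * pderivX z p + b p * z p

open Filter Topology Set

lemma IsLocalMin.deriv_deriv_nonneg {f : ℝ → ℝ} {x₀ : ℝ} (hmin : IsLocalMin f x₀)
    (hc : ContinuousAt f x₀) : 0 ≤ deriv (deriv f) x₀ := by
  by_contra! hneg
  -- `f'` vanishes at `x₀` and decreases through it, so `f` strictly decreases just right of `x₀`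
  have hright : ∀ᶠ x in 𝓝[>] x₀, deriv f x < 0 ∧ f x₀ ≤ f x :=
    (deriv_neg_right_of_sign_deriv (nhdsWithin_le_nhds
      (eventually_nhdsWithin_sign_eq_of_deriv_neg hneg hmin.deriv_eq_zero))).and
      (nhdsWithin_le_nhds hmin)
  obtain ⟨t, ht, hsub⟩ := mem_nhdsGT_iff_exists_Ioc_subset.1 hright
  have hcont : ContinuousOn f (Icc x₀ t) := by
    intro x hx
    rcases hx.1.eq_or_lt with rfl | hlt
    · exact hc.continuousWithinAt
    · exact (differentiableAt_of_deriv_ne_zero (hsub ⟨hlt, hx.2⟩).1.ne).continuousAt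
        |>.continuousWithinAt
  have hanti : StrictAntiOn f (Icc x₀ t) :=
    strictAntiOn_of_deriv_neg (convex_Icc _ _) hcont fun x hx => by
      rw [interior_Icc] at hx
      exact (hsub (Ioo_subset_Ioc_self hx)).1
  exact (hanti (left_mem_Icc.2 ht.out.le) (right_mem_Icc.2 ht.out.le) ht).not_ge
    (hsub ⟨ht, le_rfl⟩).2

lemma Lop_nonpos_of_isLocalMin {ε : ℝ} (hε : 0 ≤ ε) {a b u : ℝ × ℝ → ℝ} {p : ℝ × ℝ}
    (hmin : IsLocalMin u p) (hc : ContinuousAt u p) (hb : 0 ≤ b p) (hu : u p ≤ 0) :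
    Lop ε a b u p ≤ 0 := by
  have hx : IsLocalMin (fun s => u (s, p.2)) p.1 :=
    hmin.comp_continuous (g := fun s => (s, p.2)) (by fun_prop)
  have hy : IsLocalMin (fun t => u (p.1, t)) p.2 :=
    hmin.comp_continuous (g := fun t => (p.1, t)) (by fun_prop)
  have hxx : 0 ≤ pderivXX u p :=
    hx.deriv_deriv_nonneg (hc.comp (f := fun s => (s, p.2)) (by fun_prop))
  have hyy : 0 ≤ pderivYY u p :=
    hy.deriv_deriv_nonneg (hc.comp (f := fun t => (p.1, t)) (by fun_prop))
  have hx0 : pderivX u p = 0 := hx.deriv_eq_zero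
  rw [Lop, hx0, mul_zero, add_zero]
  nlinarith [mul_nonneg hε (add_nonneg hxx hyy), mul_nonpos_of_nonneg_of_nonpos hb hu]

theorem nonneg_of_Lop_pos {Ω : Set (ℝ × ℝ)} (hΩo : IsOpen Ω) (hΩb : Bornology.IsBounded Ω)
    {ε : ℝ} (hε : 0 ≤ ε) {a b u : ℝ × ℝ → ℝ} (hb : ∀ p ∈ Ω, 0 ≤ b p)
    (hu : ContinuousOn u (closure Ω)) (hL : ∀ p ∈ Ω, 0 < Lop ε a b u p)
    (hfr : ∀ p ∈ frontier Ω, 0 ≤ u p) : ∀ p ∈ closure Ω, 0 ≤ u p := by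
  by_contra! ⟨p, hp, hneg⟩
  obtain ⟨p₀, hp₀, hmin⟩ := hΩb.isCompact_closure.exists_isMinOn ⟨p, hp⟩ hu
  have hp₀neg : u p₀ < 0 := (hmin hp).trans_lt hneg
  have hp₀Ω : p₀ ∈ Ω := by
    rcases closure_eq_self_union_frontier Ω ▸ hp₀ with h | h
    · exact h
    · exact absurd (hfr p₀ h) hp₀neg.not_ge
  have hnhds : closure Ω ∈ 𝓝 p₀ := mem_of_superset (hΩo.mem_nhds hp₀Ω) subset_closure
  exact (hL p₀ hp₀Ω).not_ge (Lop_nonpos_of_isLocalMin hε (hmin.isLocalMin hnhds)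
    (hu.continuousAt hnhds) (hb p₀ hp₀Ω) hp₀neg.le)

lemma eventually_differentiableAt_comp_and_differentiableAt_deriv {𝕜 E F : Type*}
    [NontriviallyNormedField 𝕜] [NormedAddCommGroup E] [NormedSpace 𝕜 E]
    [NormedAddCommGroup F] [NormedSpace 𝕜 F] {f : E → F} {g : 𝕜 → E} {v : E}
    (hg : ∀ t, HasDerivAt g v t) {t₀ : 𝕜}
    (hf : ∀ᶠ x in 𝓝 (g t₀), DifferentiableAt 𝕜 f x)
    (hf2 : DifferentiableAt 𝕜 (fderiv 𝕜 f) (g t₀)) :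
    (∀ᶠ t in 𝓝 t₀, DifferentiableAt 𝕜 (fun t => f (g t)) t) ∧
      DifferentiableAt 𝕜 (deriv fun t => f (g t)) t₀ := by
  have hfg : ∀ᶠ t in 𝓝 t₀, HasDerivAt (fun t => f (g t)) (fderiv 𝕜 f (g t) v) t :=
    ((hg t₀).continuousAt.eventually hf).mono fun t ht =>
      ht.hasFDerivAt.comp_hasDerivAt t (hg t)
  refine ⟨hfg.mono fun t ht => ht.differentiableAt, ?_⟩
  have hd : DifferentiableAt 𝕜 (fun t => fderiv 𝕜 f (g t) v) t₀ :=
    (hf2.comp t₀ (hg t₀).differentiableAt).clm_apply (differentiableAt_const v)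
  exact hd.congr_of_eventuallyEq (hfg.mono fun t ht => ht.deriv)

lemma deriv_deriv_add {𝕜 F : Type*} [NontriviallyNormedField 𝕜] [NormedAddCommGroup F]
    [NormedSpace 𝕜 F] {φ ψ : 𝕜 → F} {x : 𝕜}
    (hφ : ∀ᶠ s in 𝓝 x, DifferentiableAt 𝕜 φ s) (hφ2 : DifferentiableAt 𝕜 (deriv φ) x)
    (hψ : ∀ᶠ s in 𝓝 x, DifferentiableAt 𝕜 ψ s) (hψ2 : DifferentiableAt 𝕜 (deriv ψ) x) :
    deriv (deriv fun s => φ s + ψ s) x = deriv (deriv φ) x + deriv (deriv ψ) x := by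
  have h : deriv (fun s => φ s + ψ s) =ᶠ[𝓝 x] fun s => deriv φ s + deriv ψ s := by
    filter_upwards [hφ, hψ] with s h1 h2 using deriv_fun_add h1 h2
  rw [h.deriv_eq, deriv_fun_add hφ2 hψ2]

lemma Lop_add {ε : ℝ} {a b f g : ℝ × ℝ → ℝ} {p : ℝ × ℝ}
    (hf : ∀ᶠ q in 𝓝 p, DifferentiableAt ℝ f q) (hf2 : DifferentiableAt ℝ (fderiv ℝ f) p)
    (hg : ∀ᶠ q in 𝓝 p, DifferentiableAt ℝ g q) (hg2 : DifferentiableAt ℝ (fderiv ℝ g) p) :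
    Lop ε a b (fun q => f q + g q) p = Lop ε a b f p + Lop ε a b g p := by
  have hlx : ∀ t, HasDerivAt (fun s : ℝ => (s, p.2)) (1, 0) t := fun t =>
    (hasDerivAt_id t).prodMk (hasDerivAt_const t p.2)
  have hly : ∀ t, HasDerivAt (fun s : ℝ => (p.1, s)) (0, 1) t := fun t =>
    (hasDerivAt_const t p.1).prodMk (hasDerivAt_id t)
  obtain ⟨hfx, hfx2⟩ := eventually_differentiableAt_comp_and_differentiableAt_deriv hlx hf hf2
  obtain ⟨hgx, hgx2⟩ := eventually_differentiableAt_comp_and_differentiableAt_deriv hlx hg hg2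
  obtain ⟨hfy, hfy2⟩ := eventually_differentiableAt_comp_and_differentiableAt_deriv hly hf hf2
  obtain ⟨hgy, hgy2⟩ := eventually_differentiableAt_comp_and_differentiableAt_deriv hly hg hg2
  have hX : pderivX (fun q => f q + g q) p = pderivX f p + pderivX g p :=
    deriv_fun_add hfx.self_of_nhds hgx.self_of_nhds
  have hXX : pderivXX (fun q => f q + g q) p = pderivXX f p + pderivXX g p :=
    deriv_deriv_add hfx hfx2 hgx hgx2
  have hYY : pderivYY (fun q => f q + g q) p = pderivYY f p + pderivYY g p :=
    deriv_deriv_add hfy hfy2 hgy hgy2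
  simp only [Lop, hX, hXX, hYY]
  ring

lemma Lop_neg (ε : ℝ) (a b z : ℝ × ℝ → ℝ) (p : ℝ × ℝ) :
    Lop ε a b (-z) p = -Lop ε a b z p := by
  simp only [Lop, pderivX, pderivXX, pderivYY, Pi.neg_apply, deriv.fun_neg]
  ring

lemma Lop_affine_fst (ε : ℝ) (a b : ℝ × ℝ → ℝ) (K c m : ℝ) (p : ℝ × ℝ) :
    Lop ε a b (fun q => K + c * (q.1 - m)) p = a p * c + b p * (K + c * (p.1 - m)) := by
  simp [Lop, pderivX, pderivXX, pderivYY]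

lemma neg_le_linear_barrier {Ω : Set (ℝ × ℝ)} (hΩo : IsOpen Ω) (hΩb : Bornology.IsBounded Ω)
    {ε α : ℝ} (hε : 0 ≤ ε) {a b z : ℝ × ℝ → ℝ}
    (ha : ∀ p ∈ Ω, α ≤ a p) (hb : ∀ p ∈ Ω, 0 ≤ b p) (hzc : ContinuousOn z (closure Ω))
    (hz2 : ∀ p ∈ Ω, DifferentiableAt ℝ z p ∧ DifferentiableAt ℝ (fderiv ℝ z) p)
    {KP KQ c m : ℝ} (hKQ : 0 ≤ KQ) (hc : 0 ≤ c) (hKP : KP < α * c)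
    (hm : ∀ p ∈ closure Ω, m ≤ p.1)
    (hL : ∀ p ∈ Ω, -KP ≤ Lop ε a b z p) (hfr : ∀ p ∈ frontier Ω, -KQ ≤ z p) :
    ∀ p ∈ closure Ω, -z p ≤ KQ + c * (p.1 - m) := by
  set w : ℝ × ℝ → ℝ := fun q => KQ + c * (q.1 - m) with hw_def
  have hw : ContDiff ℝ 2 w := by fun_prop
  have hw_ge : ∀ p ∈ closure Ω, KQ ≤ w p := fun p hp =>
    le_add_of_nonneg_right (mul_nonneg hc (sub_nonneg.2 (hm p hp)))
  have hLu : ∀ p ∈ Ω, 0 < Lop ε a b (fun q => w q + z q) p := by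
    intro p hp
    have hzp : ∀ᶠ q in 𝓝 p, DifferentiableAt ℝ z q :=
      eventually_of_mem (hΩo.mem_nhds hp) fun q hq => (hz2 q hq).1
    rw [Lop_add (Eventually.of_forall (hw.differentiable two_ne_zero))
      ((hw.fderiv_right one_add_one_eq_two.le).differentiable one_ne_zero).differentiableAt
      hzp (hz2 p hp).2, hw_def, Lop_affine_fst]
    have hac : α * c ≤ a p * c := mul_le_mul_of_nonneg_right (ha p hp) hc
    have hbw : 0 ≤ b p * w p := mul_nonneg (hb p hp) (hKQ.trans (hw_ge p (subset_closure hp)))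
    linarith [hL p hp]
  have hu := nonneg_of_Lop_pos (u := fun q => w q + z q) hΩo hΩb hε hb
    (hw.continuous.continuousOn.add hzc) hLu fun p hp => by
      linarith [hfr p hp, hw_ge p (frontier_subset_closure hp)]
  intro p hp
  linarith [hu p hp, show w p = KQ + c * (p.1 - m) from rfl]

theorem abs_le_of_abs_Lop_le {Ω : Set (ℝ × ℝ)} (hΩo : IsOpen Ω) (hΩb : Bornology.IsBounded Ω)
    {ε α : ℝ} (hε : 0 ≤ ε) (hα : 0 < α) {a b z : ℝ × ℝ → ℝ}
    (ha : ∀ p ∈ Ω, α ≤ a p) (hb : ∀ p ∈ Ω, 0 ≤ b p) (hzc : ContinuousOn z (closure Ω))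
    (hz2 : ∀ p ∈ Ω, DifferentiableAt ℝ z p ∧ DifferentiableAt ℝ (fderiv ℝ z) p)
    {KP KQ m : ℝ} (hKP : 0 ≤ KP) (hKQ : 0 ≤ KQ) (hm : ∀ p ∈ closure Ω, m ≤ p.1)
    (hL : ∀ p ∈ Ω, |Lop ε a b z p| ≤ KP) (hfr : ∀ p ∈ frontier Ω, |z p| ≤ KQ) :
    ∀ p ∈ closure Ω, |z p| ≤ KQ + KP / α * (p.1 - m) := by
  intro p hp
  have hz2_neg : ∀ q ∈ Ω, DifferentiableAt ℝ (-z) q ∧ DifferentiableAt ℝ (fderiv ℝ (-z)) q := by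
    intro q hq
    have hfd : fderiv ℝ (-z) = -fderiv ℝ z := funext fun _ => fderiv_neg
    exact ⟨(hz2 q hq).1.neg, hfd ▸ (hz2 q hq).2.neg⟩
  -- slope exactly `KP / α` would only give `Lop ≥ 0`; the maximum principle needs `Lop > 0`
  have hbound : ∀ c, KP / α < c → |z p| ≤ KQ + c * (p.1 - m) := by
    intro c hc
    have hc0 : 0 ≤ c := (div_nonneg hKP hα.le).trans hc.le
    have hKPc : KP < α * c := by rwa [div_lt_iff₀' hα] at hc
    have hlower := neg_le_linear_barrier hΩo hΩb hε ha hb hzc hz2 hKQ hc0 hKPc hm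
      (fun q hq => neg_le_of_abs_le (hL q hq)) (fun q hq => neg_le_of_abs_le (hfr q hq)) p hp
    have hupper := neg_le_linear_barrier hΩo hΩb hε ha hb hzc.neg hz2_neg hKQ hc0 hKPc hm
      (fun q hq => by rw [Lop_neg]; exact neg_le_neg (le_of_abs_le (hL q hq)))
      (fun q hq => neg_le_neg (le_of_abs_le (hfr q hq))) p hp
    rw [Pi.neg_apply, neg_neg] at hupper
    exact abs_le.2 ⟨by linarith, hupper⟩
  have hlim : Tendsto (fun c => KQ + c * (p.1 - m)) (𝓝[>] (KP / α))
      (𝓝 (KQ + KP / α * (p.1 - m))) :=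
    ((continuous_const.add (continuous_id.mul continuous_const)).tendsto _).mono_left
      nhdsWithin_le_nhds
  exact ge_of_tendsto hlim (eventually_nhdsWithin_of_forall hbound)

lemma fst_mem_Icc_of_mem_closure {β : Type*} [PseudoMetricSpace β] {Ω : Set (ℝ × β)}
    (hΩb : Bornology.IsBounded Ω) {p : ℝ × β}
    (hp : p ∈ closure Ω) : p.1 ∈ Icc (sInf (Prod.fst '' Ω)) (sSup (Prod.fst '' Ω)) :=
  closure_minimal (t := Prod.fst ⁻¹' Icc (sInf (Prod.fst '' Ω)) (sSup (Prod.fst '' Ω)))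
    (fun _ hq => hΩb.image_fst.subset_Icc_sInf_sSup (mem_image_of_mem _ hq))
    (isClosed_Icc.preimage continuous_fst) hp

lemma sSup_image_abs_nonneg {α : Type*} (f : α → ℝ) (s : Set α) :
    0 ≤ sSup ((fun x => |f x|) '' s) :=
  Real.sSup_nonneg (by rintro _ ⟨_, _, rfl⟩; exact abs_nonneg _)

/-- Zeroth order stability bound:
`sup_{cl Ω} |z| ≤ sup_{∂Ω} |q| + ((M_x - m_x)/α) · sup_Ω |p|`. -/
theorem stmt1 (Ω : Set (ℝ × ℝ)) (hΩo : IsOpen Ω) (hΩb : Bornology.IsBounded Ω)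
    (ε α : ℝ) (hε : 0 < ε) (hα : 0 < α)
    (a b : ℝ × ℝ → ℝ)
    (ha : ∀ p ∈ Ω, α ≤ a p) (hb : ∀ p ∈ Ω, 0 ≤ b p)
    (z P Q : ℝ × ℝ → ℝ)
    (hzc : ContinuousOn z (closure Ω))
    (hz2 : ∀ p ∈ Ω, DifferentiableAt ℝ z p ∧ DifferentiableAt ℝ (fderiv ℝ z) p)
    (hPbdd : BddAbove ((fun pt => |P pt|) '' Ω))
    (heq : ∀ p ∈ Ω, Lop ε a b z p = P p)
    (hbd : ∀ p ∈ frontier Ω, z p = Q p) :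
    ∀ pt ∈ closure Ω,
      |z pt| ≤ sSup ((fun x => |Q x|) '' frontier Ω) +
        ((sSup (Prod.fst '' Ω) - sInf (Prod.fst '' Ω)) / α) *
          sSup ((fun x => |P x|) '' Ω) := by
  intro pt hpt
  have hQbdd : BddAbove ((fun x => |Q x|) '' frontier Ω) := by
    rw [image_congr (g := fun x => |z x|) fun p hp => by rw [hbd p hp]]
    exact (hΩb.isCompact_closure.of_isClosed_subset isClosed_frontier
      frontier_subset_closure).bddAbove_image (hzc.mono frontier_subset_closure).abs
  have hbound := abs_le_of_abs_Lop_le hΩo hΩb hε.le hα ha hb hzc hz2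
    (sSup_image_abs_nonneg P Ω) (sSup_image_abs_nonneg Q (frontier Ω))
    (fun p hp => (fst_mem_Icc_of_mem_closure hΩb hp).1)
    (fun p hp => heq p hp ▸ le_csSup hPbdd (mem_image_of_mem _ hp))
    (fun p hp => hbd p hp ▸ le_csSup hQbdd (mem_image_of_mem _ hp)) pt hpt
  refine hbound.trans (add_le_add le_rfl ?_)
  rw [div_mul_comm]
  gcongr
  · exact sSup_image_abs_nonneg P Ω
  · exact (fst_mem_Icc_of_mem_closure hΩb hpt).2
end

section
/- Let N, M ≥ 2 be integers, ε > 0, and let 0 = r_0 < r_1 < … < r_N and t_0 < t_1 < … < t_M be arbitrary meshes with steps h_i = r_i − r_{i−1}, k_j = t_j − t_{j−1}, and averaged steps h̄_i = (h_i + h_{i+1})/2, k̄_j = (k_j + k_{j+1})/2. For a mesh function Z on {0,…,N}×{0,…,M} define the one-sided differences D⁺_r Z(i,j) = (Z(i+1,j) − Z(i,j))/h_{i+1}, D⁻_r Z(i,j) = (Z(i,j) − Z(i−1,j))/h_i, and similarly D⁺_t, D⁻_t; for a real coefficient c define the upwinded term (c D^±_r Z)(i,j) := ((c − |c|)/2)·D⁺_r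 Z(i,j) + ((c + |c|)/2)·D⁻_r Z(i,j), and analogously in t. Suppose at every interior index (1 ≤ i ≤ N−1, 1 ≤ j ≤ M−1) we are given strictly positive weights s(i,j), p⁺(i,j), p⁻(i,j), w(i,j), q⁺(i,j), q⁻(i,j) > 0, arbitrary real coefficients c(i,j), d(i,j), and b(i,j) ≥ 0, and define L^N Z(i,j) := −ε·s(i,j)·(p⁺(i,j)D⁺_r Z(i,j) − p⁻(i,j)D⁻_r Z(i,j))/h̄_i − ε·w(i,j)·(q⁺(i,j)D⁺_t Z(i,j) − q⁻(i,j)D⁻_t Z(i,j))/k̄_j + (c(i,j) D^±_r Z)(i,j) + (d(i,j) D^±_t Z)(i,j) + b(i,j)·Z(i,j). If Z ≥ 0 at all boundary indices (i ∈ {0,N} or j ∈ {0,M}) and L^N Z ≥ 0 at all interior indices, then Z ≥ 0 at all indices. -/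
/-!
Maximum-principle argument. If `Z` had a negative value, take a grid minimiser `(i, j)` of `Z`
with largest `i`. The boundary data force `(i, j)` to be interior, and there all one-sided
differences pointing away from `(i, j)` have the sign that makes every term of `L̃^N Z (i, j)`
nonpositive; the diffusion term in `r` is even strictly negative because `Z (i+1, j) > Z (i, j)`.
This contradicts `L̃^N Z (i, j) ≥ 0`.
-/

/-- Forward difference in the r-direction on a nonuniform mesh with steps `h`. -/
noncomputable def DpR (h : ℕ → ℝ) (Z : ℕ → ℕ → ℝ) (i j : ℕ) : ℝ :=
  (Z (i+1) j - Z i j) / h (i+1)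

/-- Backward difference in the r-direction on a nonuniform mesh with steps `h`. -/
noncomputable def DmR (h : ℕ → ℝ) (Z : ℕ → ℕ → ℝ) (i j : ℕ) : ℝ :=
  (Z i j - Z (i-1) j) / h i

/-- Forward difference in the t-direction on a nonuniform mesh with steps `k`. -/
noncomputable def DpT (k : ℕ → ℝ) (Z : ℕ → ℕ → ℝ) (i j : ℕ) : ℝ :=
  (Z i (j+1) - Z i j) / k (j+1)

/-- Backward difference in the t-direction on a nonuniform mesh with steps `k`. -/
noncomputable def DmT (k : ℕ → ℝ) (Z : ℕ → ℕ → ℝ) (i j : ℕ) : ℝ :=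
  (Z i j - Z i (j-1)) / k j

/-- Upwinded convective term `(c D^±) = ((c - |c|)/2) D⁺ + ((c + |c|)/2) D⁻`. -/
noncomputable def upwind (c Dp Dm : ℝ) : ℝ :=
  (c - |c|) / 2 * Dp + (c + |c|) / 2 * Dm

/-- The upwinded finite difference operator on the strip, with general positive weights. -/
noncomputable def LN3 (ε : ℝ) (h k : ℕ → ℝ) (s pp pm w qp qm c d b : ℕ → ℕ → ℝ)
    (Z : ℕ → ℕ → ℝ) (i j : ℕ) : ℝ :=
  -ε * s i j * (pp i j * DpR h Z i j - pm i j * DmR h Z i j) / ((h i + h (i+1)) / 2)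
  - ε * w i j * (qp i j * DpT k Z i j - qm i j * DmT k Z i j) / ((k j + k (j+1)) / 2)
  + upwind (c i j) (DpR h Z i j) (DmR h Z i j)
  + upwind (d i j) (DpT k Z i j) (DmT k Z i j)
  + b i j * Z i j

lemma upwind_nonpos (c : ℝ) {Dp Dm : ℝ} (hDp : 0 ≤ Dp) (hDm : Dm ≤ 0) :
    upwind c Dp Dm ≤ 0 :=
  add_nonpos
    (mul_nonpos_of_nonpos_of_nonneg (by linarith [le_abs_self c]) hDp)
    (mul_nonpos_of_nonneg_of_nonpos (by linarith [neg_abs_le c]) hDm)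

lemma sub_mul_pos_of_pos_of_nonpos {p q Dp Dm : ℝ} (hp : 0 < p) (hq : 0 ≤ q)
    (hDp : 0 < Dp) (hDm : Dm ≤ 0) : 0 < p * Dp - q * Dm :=
  sub_pos.2 ((mul_nonpos_of_nonneg_of_nonpos hq hDm).trans_lt (mul_pos hp hDp))

lemma sub_mul_nonneg_of_nonneg_of_nonpos {p q Dp Dm : ℝ} (hp : 0 ≤ p) (hq : 0 ≤ q)
    (hDp : 0 ≤ Dp) (hDm : Dm ≤ 0) : 0 ≤ p * Dp - q * Dm :=
  sub_nonneg.2 ((mul_nonpos_of_nonneg_of_nonpos hq hDm).trans (mul_nonneg hp hDp))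

lemma LN3_neg_of_le_neighbours {ε : ℝ} (hε : 0 < ε) {h k : ℕ → ℝ}
    {s pp pm w qp qm c d b Z : ℕ → ℕ → ℝ} {i j : ℕ}
    (hhi : 0 < h i) (hhi' : 0 < h (i+1)) (hkj : 0 < k j) (hkj' : 0 < k (j+1))
    (hs : 0 < s i j) (hpp : 0 < pp i j) (hpm : 0 < pm i j)
    (hw : 0 < w i j) (hqp : 0 < qp i j) (hqm : 0 < qm i j) (hb : 0 ≤ b i j)
    (hZ : Z i j < 0) (hright : Z i j < Z (i+1) j) (hleft : Z i j ≤ Z (i-1) j)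
    (hup : Z i j ≤ Z i (j+1)) (hdown : Z i j ≤ Z i (j-1)) :
    LN3 ε h k s pp pm w qp qm c d b Z i j < 0 := by
  have hDpR : 0 < DpR h Z i j := div_pos (sub_pos.2 hright) hhi'
  have hDmR : DmR h Z i j ≤ 0 := div_nonpos_of_nonpos_of_nonneg (sub_nonpos.2 hleft) hhi.le
  have hDpT : 0 ≤ DpT k Z i j := div_nonneg (sub_nonneg.2 hup) hkj'.le
  have hDmT : DmT k Z i j ≤ 0 := div_nonpos_of_nonpos_of_nonneg (sub_nonpos.2 hdown) hkj.le
  have hdiffR : 0 < ε * s i j * (pp i j * DpR h Z i j - pm i j * DmR h Z i j)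
      / ((h i + h (i+1)) / 2) :=
    div_pos (mul_pos (mul_pos hε hs) (sub_mul_pos_of_pos_of_nonpos hpp hpm.le hDpR hDmR))
      (by positivity)
  have hdiffT : 0 ≤ ε * w i j * (qp i j * DpT k Z i j - qm i j * DmT k Z i j)
      / ((k j + k (j+1)) / 2) :=
    div_nonneg (mul_nonneg (mul_pos hε hw).le
      (sub_mul_nonneg_of_nonneg_of_nonpos hqp.le hqm.le hDpT hDmT)) (by positivity)
  have hreact : b i j * Z i j ≤ 0 := mul_nonpos_of_nonneg_of_nonpos hb hZ.le
  have hupR := upwind_nonpos (c i j) hDpR.le hDmR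
  have hupT := upwind_nonpos (d i j) hDpT hDmT
  unfold LN3
  rw [neg_mul, neg_mul, neg_div]
  linarith

lemma exists_grid_argmin_lt_right (N M : ℕ) (Z : ℕ → ℕ → ℝ) :
    ∃ i ≤ N, ∃ j ≤ M, (∀ a ≤ N, ∀ b ≤ M, Z i j ≤ Z a b) ∧ (i < N → Z i j < Z (i+1) j) := by
  set S := Finset.range (N+1) ×ˢ Finset.range (M+1)
  have memS : ∀ {a b}, (a, b) ∈ S ↔ a ≤ N ∧ b ≤ M := by simp [S]
  obtain ⟨p, hpS, hpmin⟩ :=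
    S.exists_min_image (fun q => Z q.1 q.2) ⟨(0, 0), memS.2 ⟨N.zero_le, M.zero_le⟩⟩
  set T := S.filter (fun q => Z q.1 q.2 = Z p.1 p.2)
  obtain ⟨⟨i, j⟩, hqT, hqmax⟩ := T.exists_max_image Prod.fst ⟨p, by simp [T, hpS]⟩
  obtain ⟨hqS, hqeq⟩ := Finset.mem_filter.1 hqT
  obtain ⟨hi, hj⟩ := memS.1 hqS
  have hmin : ∀ a ≤ N, ∀ b ≤ M, Z i j ≤ Z a b := fun a ha b hb =>
    hqeq.trans_le (hpmin (a, b) (memS.2 ⟨ha, hb⟩))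
  refine ⟨i, hi, j, hj, hmin, fun hiN => lt_of_not_ge fun hle => ?_⟩
  have hT : (i+1, j) ∈ T :=
    Finset.mem_filter.2 ⟨memS.2 ⟨hiN, hj⟩, (le_antisymm hle (hmin _ hiN _ hj)).trans hqeq⟩
  exact absurd (hqmax _ hT) (by simp)

lemma sub_pred_pos_of_strictMono {r : ℕ → ℝ} {N : ℕ} (hr : ∀ n, n < N → r n < r (n+1))
    {n : ℕ} (h1 : 1 ≤ n) (hn : n ≤ N) : 0 < r n - r (n-1) := by
  have := hr (n-1) (by omega)
  rw [Nat.sub_add_cancel h1] at this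
  linarith

theorem stmt3_general (N M : ℕ) (ε : ℝ) (hε : 0 < ε)
    (r t : ℕ → ℝ)
    (hr : ∀ n, n < N → r n < r (n+1)) (ht : ∀ n, n < M → t n < t (n+1))
    (s pp pm w qp qm c d b : ℕ → ℕ → ℝ)
    (hpos : ∀ i j, 1 ≤ i → i ≤ N - 1 → 1 ≤ j → j ≤ M - 1 →
      0 < s i j ∧ 0 < pp i j ∧ 0 < pm i j ∧ 0 < w i j ∧ 0 < qp i j ∧ 0 < qm i j)
    (hb : ∀ i j, 1 ≤ i → i ≤ N - 1 → 1 ≤ j → j ≤ M - 1 → 0 ≤ b i j)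
    (Z : ℕ → ℕ → ℝ)
    (hbdry : ∀ i j, i ≤ N → j ≤ M → (i = 0 ∨ i = N ∨ j = 0 ∨ j = M) → 0 ≤ Z i j)
    (hint : ∀ i j, 1 ≤ i → i ≤ N - 1 → 1 ≤ j → j ≤ M - 1 →
      0 ≤ LN3 ε (fun n => r n - r (n-1)) (fun n => t n - t (n-1))
             s pp pm w qp qm c d b Z i j) :
    ∀ i j, i ≤ N → j ≤ M → 0 ≤ Z i j := by
  by_contra! hneg
  obtain ⟨i₀, j₀, hi₀, hj₀, hZ₀⟩ := hneg
  obtain ⟨i, hi, j, hj, hmin, hright⟩ := exists_grid_argmin_lt_right N M Z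
  have hZ : Z i j < 0 := (hmin i₀ hi₀ j₀ hj₀).trans_lt hZ₀
  obtain ⟨hi1, hiN, hj1, hjM⟩ : 1 ≤ i ∧ i ≤ N - 1 ∧ 1 ≤ j ∧ j ≤ M - 1 := by
    by_contra hbd
    exact hZ.not_ge (hbdry i j hi hj (by omega))
  obtain ⟨hs, hpp, hpm, hw, hqp, hqm⟩ := hpos i j hi1 hiN hj1 hjM
  refine (hint i j hi1 hiN hj1 hjM).not_gt (LN3_neg_of_le_neighbours hε
    (h := fun n => r n - r (n-1)) (k := fun n => t n - t (n-1))
    (sub_pred_pos_of_strictMono hr hi1 hi) (sub_pred_pos_of_strictMono hr (by omega) (by omega))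
    (sub_pred_pos_of_strictMono ht hj1 hj) (sub_pred_pos_of_strictMono ht (by omega) (by omega))
    hs hpp hpm hw hqp hqm (hb i j hi1 hiN hj1 hjM) hZ (hright (by omega))
    (hmin _ (by omega) _ hj) (hmin _ hi _ (by omega)) (hmin _ hi _ (by omega)))

/-- Discrete comparison principle for the upwinded operator `L̃^N` on the strip mesh. -/
theorem stmt3 (N M : ℕ) (hN : 2 ≤ N) (hM : 2 ≤ M) (ε : ℝ) (hε : 0 < ε)
    (r t : ℕ → ℝ) (hr0 : r 0 = 0)
    (hr : ∀ n, n < N → r n < r (n+1)) (ht : ∀ n, n < M → t n < t (n+1))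
    (s pp pm w qp qm c d b : ℕ → ℕ → ℝ)
    (hpos : ∀ i j, 1 ≤ i → i ≤ N - 1 → 1 ≤ j → j ≤ M - 1 →
      0 < s i j ∧ 0 < pp i j ∧ 0 < pm i j ∧ 0 < w i j ∧ 0 < qp i j ∧ 0 < qm i j)
    (hb : ∀ i j, 1 ≤ i → i ≤ N - 1 → 1 ≤ j → j ≤ M - 1 → 0 ≤ b i j)
    (Z : ℕ → ℕ → ℝ)
    (hbdry : ∀ i j, i ≤ N → j ≤ M → (i = 0 ∨ i = N ∨ j = 0 ∨ j = M) → 0 ≤ Z i j)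
    (hint : ∀ i j, 1 ≤ i → i ≤ N - 1 → 1 ≤ j → j ≤ M - 1 →
      0 ≤ LN3 ε (fun n => r n - r (n-1)) (fun n => t n - t (n-1))
             s pp pm w qp qm c d b Z i j) :
    ∀ i j, i ≤ N → j ≤ M → 0 ≤ Z i j :=
  stmt3_general N M ε hε r t hr ht s pp pm w qp qm c d b hpos hb Z hbdry hint
end

section
/- There exists a constant C with the following property, where C is allowed to depend only on an upper bound M for the C³-norm of a. Let x_{i−1} < x_i < x_{i+1} be real numbers, h := x_i − x_{i−1}, h' := x_{i+1} − x_i, h̄ := (h + h')/2, H := max(h, h'), and I := [x_{i−1}, x_{i+1}]. Let a be three times continuously differentiable on I with ‖a‖_{C³(I)} ≤ M and let u be four times continuously differentiable on I. Define the discrete flux T := [ a((x_i + x_{i+1})/2)·(u(x_{i+1}) − u(x_i))/h' − a((x_{i−1} + x_i)/2)·(u(x_i) − u(x_{i−1}))/h ] / h̄. Then |(a u')'(x_i) − T| ≤ C·[ |h' − h|·( |a''(x_i)|·|u'(x_i)| + |a'(x_i)|·|u''(x_i)| + |a(x_i)|·|u'''(x_i)| ) + H²·( ‖a'''‖_{∞,I}·|u'(x_i)|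 + ‖a''‖_{∞,I}·|u''(x_i)| ) + H·min{ ‖u'''‖_{∞,I}, H·(‖u'''‖_{∞,I} + ‖u''''‖_{∞,I}) } ]. -/
/-!
Write each one-sided flux as `a(m) (u x - u c) / (x - c)` with `m = (c + x) / 2`. Expanding
`a` and the difference quotient of `u` around `c` to second order gives
`a u' + (x - c)/2 · (a u')' + (x - c)² q + R(x)` at `c`, where `q` does not depend on `x`.
Subtracting the two fluxes and dividing by `h̄`, the first-order terms give `(a u')'(c)`, the
`q`-terms leave `2 (h' - h) q`, and `|R(x)| / |x - c|` is bounded by the last two terms of the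
bracket. The part of `R` carrying `u'''` is bounded either by Taylor's theorem for `u` of order
three, giving `H ‖u'''‖`, or of order four together with the Lipschitz bound on `a`, giving
`H² (‖u'''‖ + ‖u''''‖)`; hence the minimum.
-/

open Set Nat

theorem abs_sub_taylorWithinEval_univ_le {f : ℝ → ℝ} {x₀ x K : ℝ} {n : ℕ}
    (hf : ContDiffOn ℝ (n + 1) f (uIcc x₀ x)) (hf₀ : ContDiffAt ℝ n f x₀)
    (hK : ∀ y ∈ uIoo x₀ x, |iteratedDeriv (n + 1) f y| ≤ K) :
    |f x - taylorWithinEval f n univ x₀ x| ≤ K * |x - x₀| ^ (n + 1) / (n + 1)! := by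
  rcases eq_or_ne x₀ x with rfl | hx
  · simp [taylorWithinEval_self]
  obtain ⟨y, hy, hrem⟩ := taylor_mean_remainder_lagrange_iteratedDeriv hx hf
  have htaylor : taylorWithinEval f n (uIcc x₀ x) x₀ x = taylorWithinEval f n univ x₀ x := by
    simp only [taylor_within_apply, iteratedDerivWithin_univ]
    refine Finset.sum_congr rfl fun k hk => ?_
    rw [iteratedDerivWithin_eq_iteratedDeriv (uniqueDiffOn_uIcc hx)
      (hf₀.of_le (by exact_mod_cast Finset.mem_range_succ_iff.mp hk)) left_mem_uIcc]
  rw [← htaylor, hrem, abs_div, abs_mul, abs_pow, Nat.abs_cast]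
  gcongr
  exact hK y hy

noncomputable def supAbsIteratedDeriv (n : ℕ) (f : ℝ → ℝ) (s : Set ℝ) : ℝ :=
  sSup ((fun x => |iteratedDeriv n f x|) '' s)

theorem supAbsIteratedDeriv_nonneg (n : ℕ) (f : ℝ → ℝ) (s : Set ℝ) :
    0 ≤ supAbsIteratedDeriv n f s :=
  Real.sSup_nonneg (by rintro _ ⟨y, -, rfl⟩; exact abs_nonneg _)

section Icc

variable {f : ℝ → ℝ} {l r : ℝ} {n : ℕ}

-- At the endpoints `iteratedDeriv` need not be the one-sided derivative, so those two values
-- are bounded separately.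
theorem bddAbove_abs_iteratedDeriv_image_Icc (hlr : l < r) (hf : ContDiffOn ℝ n f (Icc l r)) :
    BddAbove ((fun x => |iteratedDeriv n f x|) '' Icc l r) := by
  have hcont : ContinuousOn (fun x => |iteratedDerivWithin n f (Icc l r) x|) (Icc l r) :=
    (hf.continuousOn_iteratedDerivWithin le_rfl (uniqueDiffOn_Icc hlr)).abs
  obtain ⟨B, hB⟩ := isCompact_Icc.bddAbove_image hcont
  refine ⟨max B (max |iteratedDeriv n f l| |iteratedDeriv n f r|), ?_⟩
  rintro _ ⟨y, hy, rfl⟩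
  rcases eq_endpoints_or_mem_Ioo_of_mem_Icc hy with rfl | rfl | hy'
  · exact le_max_of_le_right (le_max_left _ _)
  · exact le_max_of_le_right (le_max_right _ _)
  · refine le_max_of_le_left (le_of_eq_of_le ?_ (hB ⟨y, hy, rfl⟩))
    dsimp only
    rw [iteratedDerivWithin_eq_iteratedDeriv (uniqueDiffOn_Icc hlr)
      (hf.contDiffAt (Icc_mem_nhds hy'.1 hy'.2)) hy]

theorem abs_iteratedDeriv_le_supAbsIteratedDeriv {y : ℝ} (hlr : l < r)
    (hf : ContDiffOn ℝ n f (Icc l r)) (hy : y ∈ Icc l r) :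
    |iteratedDeriv n f y| ≤ supAbsIteratedDeriv n f (Icc l r) :=
  le_csSup (bddAbove_abs_iteratedDeriv_image_Icc hlr hf) (mem_image_of_mem _ hy)

theorem abs_sub_taylorWithinEval_le_supAbsIteratedDeriv {c x : ℝ}
    (hf : ContDiffOn ℝ (n + 1) f (Icc l r)) (hc : c ∈ Ioo l r) (hx : x ∈ Icc l r) :
    |f x - taylorWithinEval f n univ c x| ≤
      supAbsIteratedDeriv (n + 1) f (Icc l r) * |x - c| ^ (n + 1) / (n + 1)! := by
  have hsub : uIcc c x ⊆ Icc l r := uIcc_subset_Icc (Ioo_subset_Icc_self hc) hx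
  refine abs_sub_taylorWithinEval_univ_le (hf.mono hsub)
    ((hf.contDiffAt (Icc_mem_nhds hc.1 hc.2)).of_le (by norm_cast; omega)) fun y hy => ?_
  exact abs_iteratedDeriv_le_supAbsIteratedDeriv (hc.1.trans hc.2) (by exact_mod_cast hf)
    (hsub (uIoo_subset_uIcc_self hy))

end Icc

section MidpointFlux

variable (a u : ℝ → ℝ) (c x : ℝ)

noncomputable def midpointFlux : ℝ := a ((c + x) / 2) * (u x - u c) / (x - c)

noncomputable def fluxCorrection : ℝ :=
  iteratedDeriv 2 a c * deriv u c / 8 + deriv a c * iteratedDeriv 2 u c / 4 +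
    a c * iteratedDeriv 3 u c / 6

noncomputable def midpointFluxRemainder : ℝ :=
  midpointFlux a u c x - (a c * deriv u c +
    (x - c) / 2 * (deriv a c * deriv u c + a c * iteratedDeriv 2 u c) +
    (x - c) ^ 2 * fluxCorrection a u c)

noncomputable def slopeRemainder : ℝ :=
  a ((c + x) / 2) * ((u x - u c) / (x - c) - deriv u c - (x - c) / 2 * iteratedDeriv 2 u c) -
    (x - c) ^ 2 / 6 * a c * iteratedDeriv 3 u c

variable {a u c x}

theorem midpointFluxRemainder_eq :
    midpointFluxRemainder a u c x =
      (a ((c + x) / 2) - taylorWithinEval a 2 univ c ((c + x) / 2)) * deriv u c +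
        (x - c) / 2 * (a ((c + x) / 2) - taylorWithinEval a 1 univ c ((c + x) / 2)) *
          iteratedDeriv 2 u c +
        slopeRemainder a u c x := by
  simp only [midpointFluxRemainder, midpointFlux, fluxCorrection, slopeRemainder,
    taylor_within_apply, Finset.sum_range_succ, Finset.sum_range_zero, iteratedDerivWithin_univ,
    smul_eq_mul]
  norm_num [Nat.factorial]
  ring

theorem abs_fluxCorrection_le :
    |fluxCorrection a u c| ≤ (|iteratedDeriv 2 a c| * |deriv u c| +
      |deriv a c| * |iteratedDeriv 2 u c| + |a c| * |iteratedDeriv 3 u c|) / 4 := by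
  have h₁ : 0 ≤ |iteratedDeriv 2 a c| * |deriv u c| := by positivity
  have h₃ : 0 ≤ |a c| * |iteratedDeriv 3 u c| := by positivity
  calc _ ≤ |iteratedDeriv 2 a c * deriv u c / 8| + |deriv a c * iteratedDeriv 2 u c / 4| +
        |a c * iteratedDeriv 3 u c / 6| := abs_add_three _ _ _
    _ = |iteratedDeriv 2 a c| * |deriv u c| / 8 + |deriv a c| * |iteratedDeriv 2 u c| / 4 +
        |a c| * |iteratedDeriv 3 u c| / 6 := by simp only [abs_div, abs_mul, Nat.abs_ofNat]
    _ ≤ _ := by linarith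

theorem abs_slopeRemainder_le_of_taylor_two {M K : ℝ} (hx : x ≠ c)
    (hu : |u x - taylorWithinEval u 2 univ c x| ≤ K * |x - c| ^ 3 / 3 !)
    (haM : |a ((c + x) / 2)| ≤ M) (hacM : |a c| ≤ M) (hu₃ : |iteratedDeriv 3 u c| ≤ K) :
    |slopeRemainder a u c x| ≤ M * K * (x - c) ^ 2 / 3 := by
  simp only [taylor_within_apply, Finset.sum_range_succ, Finset.sum_range_zero,
    iteratedDerivWithin_univ, smul_eq_mul] at hu
  norm_num [Nat.factorial] at hu
  have hxc : 0 < |x - c| := abs_pos.mpr (sub_ne_zero.mpr hx)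
  have hδ : |(u x - u c) / (x - c) - deriv u c - (x - c) / 2 * iteratedDeriv 2 u c| ≤
      K * (x - c) ^ 2 / 6 := by
    have hxc' : x - c ≠ 0 := sub_ne_zero.mpr hx
    rw [show (u x - u c) / (x - c) - deriv u c - (x - c) / 2 * iteratedDeriv 2 u c =
        (u x - (u c + (x - c) * deriv u c + 1 / 2 * (x - c) ^ 2 * iteratedDeriv 2 u c)) /
          (x - c) by field_simp; ring, abs_div, div_le_iff₀ hxc]
    calc _ ≤ K * |x - c| ^ 3 / 6 := hu
      _ = _ := by rw [← sq_abs]; ring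
  have hM : 0 ≤ M := (abs_nonneg _).trans hacM
  calc |slopeRemainder a u c x|
      ≤ |a ((c + x) / 2)| *
            |(u x - u c) / (x - c) - deriv u c - (x - c) / 2 * iteratedDeriv 2 u c| +
          (x - c) ^ 2 / 6 * (|a c| * |iteratedDeriv 3 u c|) :=
        (abs_sub _ _).trans_eq (by
          rw [abs_mul, abs_mul, abs_mul,
            abs_of_nonneg (by positivity : (0 : ℝ) ≤ (x - c) ^ 2 / 6)]
          ring)
    _ ≤ M * (K * (x - c) ^ 2 / 6) + (x - c) ^ 2 / 6 * (M * K) := by gcongr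
    _ = _ := by ring

theorem abs_slopeRemainder_le_of_taylor_three {M K₃ K₄ : ℝ} (hx : x ≠ c)
    (hu : |u x - taylorWithinEval u 3 univ c x| ≤ K₄ * |x - c| ^ 4 / 4 !)
    (ha : |a ((c + x) / 2) - a c| ≤ M * |(c + x) / 2 - c|)
    (haM : |a ((c + x) / 2)| ≤ M) (hu₃ : |iteratedDeriv 3 u c| ≤ K₃) :
    |slopeRemainder a u c x| ≤ M * |x - c| ^ 3 * (K₃ / 12 + K₄ / 24) := by
  simp only [taylor_within_apply, Finset.sum_range_succ, Finset.sum_range_zero,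
    iteratedDerivWithin_univ, smul_eq_mul] at hu
  norm_num [Nat.factorial] at hu
  have hxc : 0 < |x - c| := abs_pos.mpr (sub_ne_zero.mpr hx)
  have hxc' : x - c ≠ 0 := sub_ne_zero.mpr hx
  set δ := (u x - (u c + (x - c) * deriv u c + 1 / 2 * (x - c) ^ 2 * iteratedDeriv 2 u c +
    1 / 6 * (x - c) ^ 3 * iteratedDeriv 3 u c)) / (x - c)
  have hδ : |δ| ≤ K₄ * |x - c| ^ 3 / 24 := by
    rw [abs_div, div_le_iff₀ hxc]
    calc _ ≤ K₄ * |x - c| ^ 4 / 24 := hu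
      _ = _ := by ring
  have hmid : |(c + x) / 2 - c| = |x - c| / 2 := by
    rw [show (c + x) / 2 - c = (x - c) / 2 by ring, abs_div, abs_two]
  rw [hmid] at ha
  have hM : 0 ≤ M := (abs_nonneg _).trans haM
  have hsplit : slopeRemainder a u c x =
      a ((c + x) / 2) * δ + (x - c) ^ 2 / 6 * (a ((c + x) / 2) - a c) * iteratedDeriv 3 u c := by
    simp only [slopeRemainder, δ]
    field_simp
    ring
  rw [hsplit]
  calc _ ≤ |a ((c + x) / 2)| * |δ| +
        (x - c) ^ 2 / 6 * (|a ((c + x) / 2) - a c| * |iteratedDeriv 3 u c|) :=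
        (abs_add_le _ _).trans_eq (by
          rw [abs_mul, abs_mul, abs_mul,
            abs_of_nonneg (by positivity : (0 : ℝ) ≤ (x - c) ^ 2 / 6)]
          ring)
    _ ≤ M * (K₄ * |x - c| ^ 3 / 24) + (x - c) ^ 2 / 6 * (M * (|x - c| / 2) * K₃) := by gcongr
    _ = _ := by rw [← sq_abs]; ring

theorem abs_slopeRemainder_le {l r M H : ℝ} (ha : ContDiffOn ℝ 1 a (Icc l r))
    (hu : ContDiffOn ℝ 4 u (Icc l r))
    (haM : ∀ y ∈ Icc l r, |a y| ≤ M) (ha'M : ∀ y ∈ Icc l r, |deriv a y| ≤ M)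
    (hc : c ∈ Ioo l r) (hx : x ∈ Icc l r) (hxc : x ≠ c) (hxH : |x - c| ≤ H) :
    |slopeRemainder a u c x| ≤ |x - c| * (M * H * min (supAbsIteratedDeriv 3 u (Icc l r))
      (H * (supAbsIteratedDeriv 3 u (Icc l r) + supAbsIteratedDeriv 4 u (Icc l r)))) := by
  have hc' : c ∈ Icc l r := Ioo_subset_Icc_self hc
  have hm : (c + x) / 2 ∈ Icc l r := ⟨by linarith [hc.1, hx.1], by linarith [hc.2, hx.2]⟩
  have hM : 0 ≤ M := (abs_nonneg _).trans (haM c hc')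
  have hu₃ := abs_iteratedDeriv_le_supAbsIteratedDeriv (hc.1.trans hc.2)
    (hu.of_le (by norm_num : (3 : WithTop ℕ∞) ≤ 4)) hc'
  have hmc : |a ((c + x) / 2) - a c| ≤ M * |(c + x) / 2 - c| := by
    have hsub : uIcc c ((c + x) / 2) ⊆ Icc l r := uIcc_subset_Icc hc' hm
    simpa [taylor_within_zero_eval] using abs_sub_taylorWithinEval_univ_le (n := 0)
      (by simpa using ha.mono hsub) ((ha.contDiffAt (Icc_mem_nhds hc.1 hc.2)).of_le (by norm_num))
      fun y hy => by simpa using ha'M y (hsub (uIoo_subset_uIcc_self hy))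
  set K₃ := supAbsIteratedDeriv 3 u (Icc l r)
  set K₄ := supAbsIteratedDeriv 4 u (Icc l r)
  have hA : |slopeRemainder a u c x| ≤ M * K₃ * (x - c) ^ 2 / 3 :=
    abs_slopeRemainder_le_of_taylor_two hxc
    (abs_sub_taylorWithinEval_le_supAbsIteratedDeriv (n := 2) (hu.of_le (by norm_num)) hc hx)
    (haM _ hm) (haM c hc') hu₃
  have hB : |slopeRemainder a u c x| ≤ M * |x - c| ^ 3 * (K₃ / 12 + K₄ / 24) :=
    abs_slopeRemainder_le_of_taylor_three hxc
    (abs_sub_taylorWithinEval_le_supAbsIteratedDeriv (n := 3) hu hc hx) hmc (haM _ hm) hu₃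
  have hK₃ : 0 ≤ K₃ := supAbsIteratedDeriv_nonneg 3 u _
  have hK₄ : 0 ≤ K₄ := supAbsIteratedDeriv_nonneg 4 u _
  have hH : 0 ≤ H := (abs_nonneg _).trans hxH
  have hx2 : (x - c) ^ 2 ≤ |x - c| * H := by
    rw [← sq_abs, sq]; exact mul_le_mul_of_nonneg_left hxH (abs_nonneg _)
  rw [mul_min_of_nonneg _ _ (by positivity), mul_min_of_nonneg _ _ (abs_nonneg _)]
  refine le_min ?_ ?_
  · have h1 := mul_le_mul_of_nonneg_left hx2 (mul_nonneg hM hK₃)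
    have h2 := mul_nonneg (mul_nonneg hM hK₃) (sq_nonneg (x - c))
    calc _ ≤ M * K₃ * (x - c) ^ 2 / 3 := hA
      _ ≤ M * K₃ * (|x - c| * H) := by linarith
      _ = _ := by ring
  · calc _ ≤ M * |x - c| ^ 3 * (K₃ / 12 + K₄ / 24) := hB
      _ ≤ M * (|x - c| * H ^ 2) * (K₃ + K₄) := by
        have h3 : |x - c| ^ 3 ≤ |x - c| * H ^ 2 := by
          rw [pow_succ, mul_comm]; gcongr
        gcongr <;> linarith
      _ = _ := by ring

theorem abs_midpointFluxRemainder_le {l r M H : ℝ} (ha : ContDiffOn ℝ 3 a (Icc l r))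
    (hu : ContDiffOn ℝ 4 u (Icc l r))
    (haM : ∀ y ∈ Icc l r, |a y| ≤ M) (ha'M : ∀ y ∈ Icc l r, |deriv a y| ≤ M)
    (hc : c ∈ Ioo l r) (hx : x ∈ Icc l r) (hxc : x ≠ c) (hxH : |x - c| ≤ H) :
    |midpointFluxRemainder a u c x| ≤ |x - c| *
      (H ^ 2 * (supAbsIteratedDeriv 3 a (Icc l r) * |deriv u c| +
          supAbsIteratedDeriv 2 a (Icc l r) * |iteratedDeriv 2 u c|) +
        M * H * min (supAbsIteratedDeriv 3 u (Icc l r))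
          (H * (supAbsIteratedDeriv 3 u (Icc l r) + supAbsIteratedDeriv 4 u (Icc l r)))) := by
  have hm : (c + x) / 2 ∈ Icc l r := ⟨by linarith [hc.1, hx.1], by linarith [hc.2, hx.2]⟩
  have hmc : |(c + x) / 2 - c| = |x - c| / 2 := by
    rw [show (c + x) / 2 - c = (x - c) / 2 by ring, abs_div, abs_two]
  have hS := abs_slopeRemainder_le (ha.of_le (by norm_num)) hu haM ha'M hc hx hxc hxH
  set B := M * H * min (supAbsIteratedDeriv 3 u (Icc l r))
    (H * (supAbsIteratedDeriv 3 u (Icc l r) + supAbsIteratedDeriv 4 u (Icc l r)))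
  set K₂ := supAbsIteratedDeriv 2 a (Icc l r)
  set K₃ := supAbsIteratedDeriv 3 a (Icc l r)
  have ha₁ : |a ((c + x) / 2) - taylorWithinEval a 1 univ c ((c + x) / 2)| ≤
      K₂ * (|x - c| / 2) ^ 2 / 2 := by
    simpa [hmc] using
      abs_sub_taylorWithinEval_le_supAbsIteratedDeriv (n := 1) (ha.of_le (by norm_num)) hc hm
  have ha₂ : |a ((c + x) / 2) - taylorWithinEval a 2 univ c ((c + x) / 2)| ≤
      K₃ * (|x - c| / 2) ^ 3 / 6 := by
    simpa [hmc, Nat.factorial] using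
      abs_sub_taylorWithinEval_le_supAbsIteratedDeriv (n := 2) ha hc hm
  have hK₂ : 0 ≤ K₂ := supAbsIteratedDeriv_nonneg 2 a _
  have hK₃ : 0 ≤ K₃ := supAbsIteratedDeriv_nonneg 3 a _
  have h3 : |x - c| ^ 3 ≤ |x - c| * H ^ 2 := by
    rw [pow_succ, mul_comm]; gcongr
  rw [midpointFluxRemainder_eq]
  calc _ ≤ |a ((c + x) / 2) - taylorWithinEval a 2 univ c ((c + x) / 2)| * |deriv u c| +
        |x - c| / 2 * |a ((c + x) / 2) - taylorWithinEval a 1 univ c ((c + x) / 2)| *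
          |iteratedDeriv 2 u c| + |slopeRemainder a u c x| :=
        (abs_add_three _ _ _).trans_eq (by rw [abs_mul, abs_mul, abs_mul, abs_div, abs_two])
    _ ≤ K₃ * (|x - c| / 2) ^ 3 / 6 * |deriv u c| +
        |x - c| / 2 * (K₂ * (|x - c| / 2) ^ 2 / 2) * |iteratedDeriv 2 u c| + |x - c| * B := by
        gcongr
    _ = |x - c| ^ 3 * (K₃ * |deriv u c| / 48 + K₂ * |iteratedDeriv 2 u c| / 16) +
        |x - c| * B := by
        ring
    _ ≤ |x - c| * H ^ 2 * (K₃ * |deriv u c| + K₂ * |iteratedDeriv 2 u c|) + |x - c| * B := by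
        gcongr <;> exact div_le_self (by positivity) (by norm_num)
    _ = _ := by ring

end MidpointFlux

theorem deriv_mul_deriv_eq {a u : ℝ → ℝ} {c : ℝ} (ha : DifferentiableAt ℝ a c)
    (hu : ContDiffAt ℝ 2 u c) :
    deriv (fun x => a x * deriv u x) c = deriv a c * deriv u c + a c * iteratedDeriv 2 u c := by
  rw [deriv_fun_mul ha ((hu.derivWithin (m := 1) le_rfl).differentiableAt one_ne_zero),
    iteratedDeriv_succ', iteratedDeriv_one]

theorem deriv_sub_fluxDifference_eq {a u : ℝ → ℝ} {xm c xp : ℝ}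
    (hm : xm < c) (hp : c < xp) :
    deriv a c * deriv u c + a c * iteratedDeriv 2 u c -
      (a ((c + xp) / 2) * (u xp - u c) / (xp - c) - a ((xm + c) / 2) * (u c - u xm) / (c - xm)) /
        ((c - xm + (xp - c)) / 2) =
    -((midpointFluxRemainder a u c xp - midpointFluxRemainder a u c xm) /
        ((c - xm + (xp - c)) / 2) + 2 * ((xp - c) - (c - xm)) * fluxCorrection a u c) := by
  have h1 : xp - c ≠ 0 := (sub_pos.2 hp).ne'
  have h2 : xm - c ≠ 0 := (sub_neg.2 hm).ne
  have h3 : c - xm ≠ 0 := (sub_pos.2 hm).ne'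
  have h4 : c - xm + (xp - c) ≠ 0 := ne_of_gt (by linarith)
  simp only [midpointFluxRemainder, midpointFlux]
  rw [add_comm xm c]
  field_simp
  ring

theorem abs_deriv_mul_deriv_sub_fluxDifference_le {a u : ℝ → ℝ} {xm c xp M H : ℝ}
    (hm : xm < c) (hp : c < xp) (hmH : c - xm ≤ H) (hpH : xp - c ≤ H)
    (ha : ContDiffOn ℝ 3 a (Icc xm xp)) (hu : ContDiffOn ℝ 4 u (Icc xm xp))
    (haM : ∀ y ∈ Icc xm xp, |a y| ≤ M) (ha'M : ∀ y ∈ Icc xm xp, |deriv a y| ≤ M) :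
    |deriv (fun x => a x * deriv u x) c -
        (a ((c + xp) / 2) * (u xp - u c) / (xp - c) - a ((xm + c) / 2) * (u c - u xm) / (c - xm)) /
          ((c - xm + (xp - c)) / 2)| ≤
      |(xp - c) - (c - xm)| * (|iteratedDeriv 2 a c| * |deriv u c| +
          |deriv a c| * |iteratedDeriv 2 u c| + |a c| * |iteratedDeriv 3 u c|) / 2 +
        2 * (H ^ 2 * (supAbsIteratedDeriv 3 a (Icc xm xp) * |deriv u c| +
            supAbsIteratedDeriv 2 a (Icc xm xp) * |iteratedDeriv 2 u c|) +
          M * H * min (supAbsIteratedDeriv 3 u (Icc xm xp))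
            (H * (supAbsIteratedDeriv 3 u (Icc xm xp) + supAbsIteratedDeriv 4 u (Icc xm xp)))) := by
  have hc : c ∈ Ioo xm xp := ⟨hm, hp⟩
  have hcu : ContDiffAt ℝ 4 u c := hu.contDiffAt (Icc_mem_nhds hm hp)
  have hca : ContDiffAt ℝ 3 a c := ha.contDiffAt (Icc_mem_nhds hm hp)
  rw [deriv_mul_deriv_eq (hca.differentiableAt (by norm_num)) (hcu.of_le (by norm_num)),
    deriv_sub_fluxDifference_eq hm hp, abs_neg]
  have hp' : |xp - c| ≤ H := by rwa [abs_of_pos (sub_pos.2 hp)]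
  have hm' : |xm - c| ≤ H := by rwa [abs_of_neg (sub_neg.2 hm), neg_sub]
  have hRp := abs_midpointFluxRemainder_le ha hu haM ha'M hc
    (right_mem_Icc.2 (hm.trans hp).le) hp.ne' hp'
  have hRm := abs_midpointFluxRemainder_le ha hu haM ha'M hc
    (left_mem_Icc.2 (hm.trans hp).le) hm.ne hm'
  have hq := abs_fluxCorrection_le (a := a) (u := u) (c := c)
  set B := H ^ 2 * (supAbsIteratedDeriv 3 a (Icc xm xp) * |deriv u c| +
      supAbsIteratedDeriv 2 a (Icc xm xp) * |iteratedDeriv 2 u c|) +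
    M * H * min (supAbsIteratedDeriv 3 u (Icc xm xp))
      (H * (supAbsIteratedDeriv 3 u (Icc xm xp) + supAbsIteratedDeriv 4 u (Icc xm xp)))
  set E := |iteratedDeriv 2 a c| * |deriv u c| + |deriv a c| * |iteratedDeriv 2 u c| +
    |a c| * |iteratedDeriv 3 u c|
  have hb : 0 < (c - xm + (xp - c)) / 2 := by linarith
  calc _ ≤ (|midpointFluxRemainder a u c xp| + |midpointFluxRemainder a u c xm|) /
          ((c - xm + (xp - c)) / 2) + 2 * |(xp - c) - (c - xm)| * |fluxCorrection a u c| := by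
        refine (abs_add_le _ _).trans (add_le_add ?_ (by rw [abs_mul, abs_mul, abs_two]))
        rw [abs_div, abs_of_pos hb]
        gcongr
        exact abs_sub _ _
    _ ≤ (|xp - c| * B + |xm - c| * B) / ((c - xm + (xp - c)) / 2) +
          2 * |(xp - c) - (c - xm)| * (E / 4) := by gcongr
    _ = _ := by
        rw [abs_of_pos (sub_pos.2 hp), abs_of_neg (sub_neg.2 hm),
          show (xp - c) * B + -(xm - c) * B = 2 * B * ((c - xm + (xp - c)) / 2) by ring,
          mul_div_cancel_right₀ _ hb.ne']
        ring

/-- Truncation error bound for the weighted upwind flux discretization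
`(h_i/h̄_i) D⁻(a(x_{i+1/2}) D⁺ u)(x_i)` on a nonuniform mesh. -/
theorem stmt7 (M : ℝ) : ∃ C : ℝ, 0 < C ∧
    ∀ (xm xi xp : ℝ) (a u : ℝ → ℝ),
      xm < xi → xi < xp →
      ContDiffOn ℝ 3 a (Set.Icc xm xp) →
      ContDiffOn ℝ 4 u (Set.Icc xm xp) →
      (∀ x ∈ Set.Icc xm xp, ∀ k ≤ 3, |iteratedDeriv k a x| ≤ M) →
      |deriv (fun x => a x * deriv u x) xi -
          (a ((xi + xp) / 2) * (u xp - u xi) / (xp - xi) -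
            a ((xm + xi) / 2) * (u xi - u xm) / (xi - xm)) /
            (((xi - xm) + (xp - xi)) / 2)| ≤
        C * (|(xp - xi) - (xi - xm)| *
              (|iteratedDeriv 2 a xi| * |deriv u xi| +
               |deriv a xi| * |iteratedDeriv 2 u xi| +
               |a xi| * |iteratedDeriv 3 u xi|) +
             (max (xi - xm) (xp - xi)) ^ 2 *
              (sSup ((fun x => |iteratedDeriv 3 a x|) '' Set.Icc xm xp) * |deriv u xi| +
               sSup ((fun x => |iteratedDeriv 2 a x|) '' Set.Icc xm xp) *
                 |iteratedDeriv 2 u xi|) +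
             (max (xi - xm) (xp - xi)) *
              min (sSup ((fun x => |iteratedDeriv 3 u x|) '' Set.Icc xm xp))
                ((max (xi - xm) (xp - xi)) *
                  (sSup ((fun x => |iteratedDeriv 3 u x|) '' Set.Icc xm xp) +
                   sSup ((fun x => |iteratedDeriv 4 u x|) '' Set.Icc xm xp)))) := by
  refine ⟨2 * |M| + 2, by positivity, fun xm xi xp a u hmi hip ha hu hM => ?_⟩
  refine (abs_deriv_mul_deriv_sub_fluxDifference_le hmi hip (le_max_left _ _) (le_max_right _ _)
    ha hu (fun y hy => by simpa using hM y hy 0 (by norm_num))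
    (fun y hy => by simpa using hM y hy 1 (by norm_num))).trans ?_
  set H := max (xi - xm) (xp - xi)
  set P := |(xp - xi) - (xi - xm)| * (|iteratedDeriv 2 a xi| * |deriv u xi| +
    |deriv a xi| * |iteratedDeriv 2 u xi| + |a xi| * |iteratedDeriv 3 u xi|)
  set Q := H ^ 2 * (supAbsIteratedDeriv 3 a (Icc xm xp) * |deriv u xi| +
    supAbsIteratedDeriv 2 a (Icc xm xp) * |iteratedDeriv 2 u xi|)
  set R := min (supAbsIteratedDeriv 3 u (Icc xm xp))
    (H * (supAbsIteratedDeriv 3 u (Icc xm xp) + supAbsIteratedDeriv 4 u (Icc xm xp)))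
  have hH : 0 ≤ H := le_max_of_le_left (by linarith)
  have hP : 0 ≤ P := by positivity
  have hQ : 0 ≤ Q := by
    have := supAbsIteratedDeriv_nonneg 3 a (Icc xm xp)
    have := supAbsIteratedDeriv_nonneg 2 a (Icc xm xp)
    positivity
  have hR : 0 ≤ R := le_min (supAbsIteratedDeriv_nonneg _ _ _) <| mul_nonneg hH <|
    add_nonneg (supAbsIteratedDeriv_nonneg _ _ _) (supAbsIteratedDeriv_nonneg _ _ _)
  show P / 2 + 2 * (Q + M * H * R) ≤ (2 * |M| + 2) * (P + Q + H * R)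
  nlinarith [le_abs_self M, abs_nonneg M, mul_nonneg hH hR]
end

section
/- Let φ, ψ : ℝ → ℝ be three times continuously differentiable with τ(t) := √(φ'(t)² + ψ'(t)²) > 0, and set n₁ := −ψ'/τ, n₂ := φ'/τ, κ := (φ'ψ'' − ψ'φ'')/τ³. Define the coordinate map F(r,t) := (φ(t) + r·n₁(t), ψ(t) + r·n₂(t)), and the functions η(r,t) := 1 − κ(t)·r and ζ(r,t) := 1/(τ(t)·η(r,t)). Fix (r₀,t₀) with |κ(t₀)·r₀| < 1 and let u be a real-valued function that is twice continuously differentiable in a neighbourhood of F(r₀,t₀). Then, writing ũ := u ∘ F, the Laplacian of u satisfies Δu(F(r₀,t₀)) = [ η^{−1}·∂/∂r( η·∂ũ/∂r ) + ζ·∂/∂t( ζ·∂ũ/∂t ) ](r₀,t₀). -/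
/-- Speed `τ = √(φ'² + ψ'²)` of the boundary parameterization. -/
noncomputable def speedTau (φ ψ : ℝ → ℝ) (t : ℝ) : ℝ :=
  Real.sqrt ((deriv φ t) ^ 2 + (deriv ψ t) ^ 2)

/-- First component `n₁ = -ψ'/τ` of the unit normal. -/
noncomputable def normal1 (φ ψ : ℝ → ℝ) (t : ℝ) : ℝ :=
  -deriv ψ t / speedTau φ ψ t

/-- Second component `n₂ = φ'/τ` of the unit normal. -/
noncomputable def normal2 (φ ψ : ℝ → ℝ) (t : ℝ) : ℝ :=
  deriv φ t / speedTau φ ψ t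

/-- Signed curvature `κ = (φ'ψ'' - ψ'φ'')/τ³`. -/
noncomputable def curv (φ ψ : ℝ → ℝ) (t : ℝ) : ℝ :=
  (deriv φ t * deriv (deriv ψ) t - deriv ψ t * deriv (deriv φ) t) / (speedTau φ ψ t) ^ 3

/-- Boundary-fitted coordinate map `F(r,t) = (φ(t) + r n₁(t), ψ(t) + r n₂(t))`. -/
noncomputable def coordMap (φ ψ : ℝ → ℝ) (p : ℝ × ℝ) : ℝ × ℝ :=
  (φ p.2 + p.1 * normal1 φ ψ p.2, ψ p.2 + p.1 * normal2 φ ψ p.2)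

/-- `ζ(r,t) = 1/(τ(t)·(1 - κ(t)r))`. -/
noncomputable def zetaFn (φ ψ : ℝ → ℝ) (r t : ℝ) : ℝ :=
  1 / (speedTau φ ψ t * (1 - curv φ ψ t * r))

/-!
Along the radial curve `r ↦ F(r, t₀)` the velocity is the unit normal `N`; along the tangential
curve `t ↦ F(r₀, t)` it is `η τ T`, with `T` the unit tangent, and `T' = κ τ N`. Writing each
weighted derivative `c · ∂ũ` as `Du(F)(w)` with `w = η N`, respectively `w = T`, the product rule
gives `η⁻¹ ∂_r(η ∂_r ũ) = D²u(N, N) - (κ/η) Du(N)` and `ζ ∂_t(ζ ∂_t ũ) = D²u(T, T) + (κ/η) Du(N)`.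
The first-order terms cancel, and `D²u(N, N) + D²u(T, T)` is the trace of the Hessian in the
orthonormal frame `(N, T)`.
-/

open Filter Topology

section SecondDerivativeAlongCurve

variable {E : Type*} [NormedAddCommGroup E] [NormedSpace ℝ E] {u : E → ℝ}
  {γ γ' w : ℝ → E} {c : ℝ → ℝ} {w' : E} {s₀ : ℝ}

/-- Writing `c s * (u ∘ γ)' s = Du(γ s) (w s)` with `w = c • γ'` makes the weighted second
derivative a product rule, without ever differentiating `γ'` or `c` separately. -/
theorem hasDerivAt_mul_deriv_comp (hu : ContDiffAt ℝ 2 u (γ s₀))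
    (hγ : ∀ᶠ s in 𝓝 s₀, HasDerivAt γ (γ' s) s) (hw : ∀ᶠ s in 𝓝 s₀, c s • γ' s = w s)
    (hw' : HasDerivAt w w' s₀) :
    HasDerivAt (fun s => c s * deriv (fun s' => u (γ s')) s)
      (fderiv ℝ (fderiv ℝ u) (γ s₀) (γ' s₀) (w s₀) + fderiv ℝ u (γ s₀) w') s₀ := by
  have hγ₀ : HasDerivAt γ (γ' s₀) s₀ := hγ.self_of_nhds
  have hu_diff : ∀ᶠ s in 𝓝 s₀, DifferentiableAt ℝ u (γ s) :=
    hγ₀.continuousAt.eventually <|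
      (hu.eventually (by simp)).mono fun y hy => hy.differentiableAt (by norm_num)
  have hDu : HasDerivAt (fun s => fderiv ℝ u (γ s)) (fderiv ℝ (fderiv ℝ u) (γ s₀) (γ' s₀)) s₀ :=
    ((hu.fderiv_right (m := 1) (by norm_num)).differentiableAt (by norm_num)).hasFDerivAt
      |>.comp_hasDerivAt s₀ hγ₀
  refine (hDu.clm_apply hw').congr_of_eventuallyEq ?_
  filter_upwards [hγ, hw, hu_diff] with s hγs hws hus
  have hchain : HasDerivAt (fun s' => u (γ s')) (fderiv ℝ u (γ s) (γ' s)) s :=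
    hus.hasFDerivAt.comp_hasDerivAt s hγs
  rw [hchain.deriv, ← hws, map_smul, smul_eq_mul]

end SecondDerivativeAlongCurve

theorem pderivXX_eq_fderiv_fderiv {u : ℝ × ℝ → ℝ} {p : ℝ × ℝ} (hu : ContDiffAt ℝ 2 u p) :
    pderivXX u p = fderiv ℝ (fderiv ℝ u) p (1, 0) (1, 0) := by
  have h := hasDerivAt_mul_deriv_comp (γ := fun s => (s, p.2)) (γ' := fun _ => (1, 0))
    (c := fun _ => 1) (w := fun _ => (1, 0)) hu
    (.of_forall fun s => (hasDerivAt_id s).prodMk (hasDerivAt_const s p.2))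
    (.of_forall fun _ => one_smul ℝ _) (hasDerivAt_const p.1 _)
  simpa only [one_mul, map_zero, add_zero, Prod.mk.eta, pderivXX] using h.deriv

theorem pderivYY_eq_fderiv_fderiv {u : ℝ × ℝ → ℝ} {p : ℝ × ℝ} (hu : ContDiffAt ℝ 2 u p) :
    pderivYY u p = fderiv ℝ (fderiv ℝ u) p (0, 1) (0, 1) := by
  have h := hasDerivAt_mul_deriv_comp (γ := fun s => (p.1, s)) (γ' := fun _ => (0, 1))
    (c := fun _ => 1) (w := fun _ => (0, 1)) hu
    (.of_forall fun s => (hasDerivAt_const s p.1).prodMk (hasDerivAt_id s))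
    (.of_forall fun _ => one_smul ℝ _) (hasDerivAt_const p.2 _)
  simpa only [one_mul, map_zero, add_zero, Prod.mk.eta, pderivYY] using h.deriv

/-- Invariance of the trace of a bilinear form on `ℝ²` under rotations. -/
theorem bilin_add_bilin_of_sq_add_sq_eq_one (B : ℝ × ℝ →L[ℝ] ℝ × ℝ →L[ℝ] ℝ) {a b : ℝ}
    (hab : a ^ 2 + b ^ 2 = 1) :
    B (a, b) (a, b) + B (b, -a) (b, -a) = B (1, 0) (1, 0) + B (0, 1) (0, 1) := by
  have hv : ∀ x y : ℝ, ((x, y) : ℝ × ℝ) = x • ((1 : ℝ), (0 : ℝ)) + y • ((0 : ℝ), (1 : ℝ)) := by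
    intro x y; simp
  rw [hv a b, hv b (-a)]
  simp only [map_add, map_smul, add_apply, smul_apply, smul_eq_mul]
  linear_combination (B (1, 0) (1, 0) + B (0, 1) (0, 1)) * hab

noncomputable def unitNormal (φ ψ : ℝ → ℝ) (t : ℝ) : ℝ × ℝ :=
  (normal1 φ ψ t, normal2 φ ψ t)

noncomputable def unitTangent (φ ψ : ℝ → ℝ) (t : ℝ) : ℝ × ℝ :=
  (normal2 φ ψ t, -normal1 φ ψ t)

theorem speedTau_sq (φ ψ : ℝ → ℝ) (t : ℝ) :
    speedTau φ ψ t ^ 2 = deriv φ t ^ 2 + deriv ψ t ^ 2 :=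
  Real.sq_sqrt (by positivity)

section BoundaryFittedCoordinates

variable {φ ψ : ℝ → ℝ}

theorem normal1_sq_add_normal2_sq {t : ℝ} (hτ : speedTau φ ψ t ≠ 0) :
    normal1 φ ψ t ^ 2 + normal2 φ ψ t ^ 2 = 1 := by
  unfold normal1 normal2
  field_simp
  linear_combination -(speedTau_sq φ ψ t)

theorem hasDerivAt_coordMap_radial (r t : ℝ) :
    HasDerivAt (fun s => coordMap φ ψ (s, t)) (unitNormal φ ψ t) r := by
  refine ((((hasDerivAt_id r).mul_const (normal1 φ ψ t)).const_add (φ t)).prodMk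
    (((hasDerivAt_id r).mul_const (normal2 φ ψ t)).const_add (ψ t))).congr_deriv ?_
  simp [unitNormal]

variable (hφ : ContDiff ℝ 2 φ) (hψ : ContDiff ℝ 2 ψ)
include hφ hψ

theorem hasDerivAt_speedTau {t : ℝ} (hτ : speedTau φ ψ t ≠ 0) :
    HasDerivAt (speedTau φ ψ)
      ((deriv φ t * deriv (deriv φ) t + deriv ψ t * deriv (deriv ψ) t) / speedTau φ ψ t) t := by
  have hsq : HasDerivAt (fun s => deriv φ s ^ 2 + deriv ψ s ^ 2)
      (2 * deriv φ t * deriv (deriv φ) t + 2 * deriv ψ t * deriv (deriv ψ) t) t := by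
    refine (((hφ.differentiable_deriv_two t).hasDerivAt.pow 2).add
      ((hψ.differentiable_deriv_two t).hasDerivAt.pow 2)).congr_deriv ?_
    simp only [Nat.cast_ofNat]
    ring
  have hpos : deriv φ t ^ 2 + deriv ψ t ^ 2 ≠ 0 := fun h => hτ (by simp [speedTau, h])
  refine ((Real.hasDerivAt_sqrt hpos).comp t hsq).congr_deriv ?_
  change 1 / (2 * speedTau φ ψ t) * _ = _
  field_simp

theorem hasDerivAt_normal1 {t : ℝ} (hτ : speedTau φ ψ t ≠ 0) :
    HasDerivAt (normal1 φ ψ) (-curv φ ψ t * deriv φ t) t := by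
  refine ((hψ.differentiable_deriv_two t).hasDerivAt.neg.div
    (hasDerivAt_speedTau hφ hψ hτ) hτ).congr_deriv ?_
  unfold curv
  field_simp
  simp only [Pi.neg_apply]
  linear_combination -deriv (deriv ψ) t * speedTau_sq φ ψ t

theorem hasDerivAt_normal2 {t : ℝ} (hτ : speedTau φ ψ t ≠ 0) :
    HasDerivAt (normal2 φ ψ) (-curv φ ψ t * deriv ψ t) t := by
  refine ((hφ.differentiable_deriv_two t).hasDerivAt.div
    (hasDerivAt_speedTau hφ hψ hτ) hτ).congr_deriv ?_
  unfold curv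
  field_simp
  linear_combination deriv (deriv φ) t * speedTau_sq φ ψ t

theorem hasDerivAt_unitTangent {t : ℝ} (hτ : speedTau φ ψ t ≠ 0) :
    HasDerivAt (unitTangent φ ψ) ((curv φ ψ t * speedTau φ ψ t) • unitNormal φ ψ t) t := by
  refine ((hasDerivAt_normal2 hφ hψ hτ).prodMk (hasDerivAt_normal1 hφ hψ hτ).neg).congr_deriv ?_
  simp only [unitNormal, normal1, normal2, Prod.smul_mk, smul_eq_mul, Prod.mk.injEq]
  constructor <;> field_simp

theorem hasDerivAt_coordMap_tangential (r : ℝ) {t : ℝ} (hτ : speedTau φ ψ t ≠ 0) :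
    HasDerivAt (fun s => coordMap φ ψ (r, s))
      (((1 - curv φ ψ t * r) * speedTau φ ψ t) • unitTangent φ ψ t) t := by
  refine (((hφ.differentiable (by norm_num) t).hasDerivAt.add
    ((hasDerivAt_normal1 hφ hψ hτ).const_mul r)).prodMk
    ((hψ.differentiable (by norm_num) t).hasDerivAt.add
    ((hasDerivAt_normal2 hφ hψ hτ).const_mul r))).congr_deriv ?_
  simp only [unitTangent, normal1, normal2, Prod.smul_mk, smul_eq_mul, Prod.mk.injEq]
  constructor <;> field_simp <;> ring

theorem continuous_curv (hτ : ∀ t, speedTau φ ψ t ≠ 0) : Continuous (curv φ ψ) := by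
  have hφ' := hφ.continuous_deriv (by norm_num)
  have hψ' := hψ.continuous_deriv (by norm_num)
  have hφ'' := (ContDiff.deriv' (n := 1) hφ).continuous_deriv_one
  have hψ'' := (ContDiff.deriv' (n := 1) hψ).continuous_deriv_one
  have hτc : Continuous (speedTau φ ψ) :=
    ((hφ'.pow 2).add (hψ'.pow 2)).sqrt
  exact ((hφ'.mul hψ'').sub (hψ'.mul hφ'')).div (hτc.pow 3) fun t => pow_ne_zero 3 (hτ t)

theorem eventually_one_sub_curv_mul_ne_zero (hτ : ∀ t, speedTau φ ψ t ≠ 0) {r t₀ : ℝ}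
    (h : 1 - curv φ ψ t₀ * r ≠ 0) : ∀ᶠ t in 𝓝 t₀, 1 - curv φ ψ t * r ≠ 0 :=
  (continuousAt_const.sub ((continuous_curv hφ hψ hτ).continuousAt.mul
    continuousAt_const)).eventually_ne h

end BoundaryFittedCoordinates

/-- Transformation of the Laplacian to boundary-fitted coordinates:
`Δu = η⁻¹ ∂_r(η ∂_r ũ) + ζ ∂_t(ζ ∂_t ũ)`, with `η = 1 - κr`, `ζ = 1/(τη)`. -/
theorem stmt10 (φ ψ : ℝ → ℝ) (hφ : ContDiff ℝ 3 φ) (hψ : ContDiff ℝ 3 ψ)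
    (hτ : ∀ s, 0 < speedTau φ ψ s)
    (r₀ t₀ : ℝ) (hη : |curv φ ψ t₀ * r₀| < 1)
    (u : ℝ × ℝ → ℝ) (hu : ContDiffAt ℝ 2 u (coordMap φ ψ (r₀, t₀))) :
    pderivXX u (coordMap φ ψ (r₀, t₀)) + pderivYY u (coordMap φ ψ (r₀, t₀)) =
      (1 - curv φ ψ t₀ * r₀)⁻¹ *
        deriv (fun s => (1 - curv φ ψ t₀ * s) *
          deriv (fun s' => u (coordMap φ ψ (s', t₀))) s) r₀ +
      zetaFn φ ψ r₀ t₀ *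
        deriv (fun s => zetaFn φ ψ r₀ s *
          deriv (fun s' => u (coordMap φ ψ (r₀, s'))) s) t₀ := by
  have hφ₂ : ContDiff ℝ 2 φ := hφ.of_le (by norm_num)
  have hψ₂ : ContDiff ℝ 2 ψ := hψ.of_le (by norm_num)
  have hτ₀ : ∀ s, speedTau φ ψ s ≠ 0 := fun s => (hτ s).ne'
  have hη₀ : 1 - curv φ ψ t₀ * r₀ ≠ 0 := by linarith [(abs_lt.mp hη).2]
  have hr := hasDerivAt_mul_deriv_comp (γ := fun s => coordMap φ ψ (s, t₀))
    (c := fun s => 1 - curv φ ψ t₀ * s) (w := fun s => (1 - curv φ ψ t₀ * s) • unitNormal φ ψ t₀)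
    hu (.of_forall fun s => hasDerivAt_coordMap_radial s t₀) (.of_forall fun _ => rfl)
    ((((hasDerivAt_id r₀).const_mul _).const_sub 1).smul_const _)
  have ht := hasDerivAt_mul_deriv_comp (γ := fun s => coordMap φ ψ (r₀, s))
    (c := zetaFn φ ψ r₀) (w := unitTangent φ ψ) hu
    (.of_forall fun s => hasDerivAt_coordMap_tangential hφ₂ hψ₂ r₀ (hτ₀ s))
    ((eventually_one_sub_curv_mul_ne_zero hφ₂ hψ₂ hτ₀ hη₀).mono fun s hs => by
      rw [smul_smul, zetaFn, one_div_mul_eq_div, mul_comm, div_self (mul_ne_zero (hτ₀ s) hs),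
        one_smul])
    (hasDerivAt_unitTangent hφ₂ hψ₂ (hτ₀ t₀))
  rw [pderivXX_eq_fderiv_fderiv hu, pderivYY_eq_fderiv_fderiv hu, hr.deriv, ht.deriv,
    ← bilin_add_bilin_of_sq_add_sq_eq_one _ (normal1_sq_add_normal2_sq (hτ₀ t₀))]
  simp only [map_smul, smul_apply, smul_eq_mul, zetaFn, unitNormal, unitTangent]
  field_simp [hτ₀ t₀]
  ring
end
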